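/- arXiv:0707.1928 — 2 statements merged into one kernel-verified Lean document; each statement's English description precedes it below -/
import Mathlib

section
/- Let μ be a finite measure on a measurable space Ω, let A and B be sets with μ(A Δ B) ≠ μ(A), and let F₁, F₂ : Set Ω → ℝ be set functions continual at A Δ B (with respect to μ). Let (Bₙ) be a sequence of sets with μ(Bₙ Δ B) → 0, and write D₁ = (F₁(A Δ B) − F₁(A)) / ((μ(A Δ B)).toReal − (μ(A)).toReal) and D₂ = (F₂(A Δ B) − F₂(A)) / ((μ(A Δ B)).toReal − (μ(A)).toReal). Then the difference quotients of the product, (F₁(A Δ Bₙ)·F₂(A Δ Bₙ) − F₁(A)·F₂(A)) / ((μ(A Δ Bₙ)).toReal − (μ(A)).toReal), converge to ((F₂(A Δ B) + F₂(A))/2)·D₁ + ((F₁(A Δ B) + F₁(A))/2)·D₂ as n → ∞ (the rule for differentiating a product of set functions). -/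
open MeasureTheory Filter Topology

/-- A set function `F` is continual at a set `C` with respect to the measure `μ`:
for every `ε > 0` there is `δ > 0` such that `μ (C ∆ D) < δ` implies `|F D - F C| < ε`. -/
def ContinualAt {Ω : Type*} [MeasurableSpace Ω] (μ : MeasureTheory.Measure Ω)
    (F : Set Ω → ℝ) (C : Set Ω) : Prop :=
  ∀ ε : ℝ, 0 < ε → ∃ δ : ENNReal, 0 < δ ∧
    ∀ D : Set Ω, μ (symmDiff C D) < δ → |F D - F C| < ε

theorem derivative_of_product {Ω : Type*} [MeasurableSpace Ω]
    (μ : Measure Ω) [IsFiniteMeasure μ]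
    (A B : Set Ω) (hne : μ (symmDiff A B) ≠ μ A)
    (F₁ F₂ : Set Ω → ℝ)
    (hF₁ : ContinualAt μ F₁ (symmDiff A B)) (hF₂ : ContinualAt μ F₂ (symmDiff A B))
    (Bn : ℕ → Set Ω)
    (hB : Tendsto (fun n => μ (symmDiff (Bn n) B)) atTop (𝓝 0))
    (D₁ D₂ : ℝ)
    (hD₁ : D₁ = (F₁ (symmDiff A B) - F₁ A) /
        ((μ (symmDiff A B)).toReal - (μ A).toReal))
    (hD₂ : D₂ = (F₂ (symmDiff A B) - F₂ A) /
        ((μ (symmDiff A B)).toReal - (μ A).toReal)) :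
    Tendsto (fun n => (F₁ (symmDiff A (Bn n)) * F₂ (symmDiff A (Bn n)) - F₁ A * F₂ A) /
        ((μ (symmDiff A (Bn n))).toReal - (μ A).toReal)) atTop
      (𝓝 ((F₂ (symmDiff A B) + F₂ A) / 2 * D₁ + (F₁ (symmDiff A B) + F₁ A) / 2 * D₂)) := by
  set C := symmDiff A B with hC
  have hsd : ∀ n, symmDiff C (symmDiff A (Bn n)) = symmDiff (Bn n) B := by
    intro n
    rw [hC, symmDiff_comm A B, symmDiff_assoc, symmDiff_symmDiff_cancel_left,
      symmDiff_comm]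
  have hμn : Tendsto (fun n => μ (symmDiff C (symmDiff A (Bn n)))) atTop (𝓝 0) := by
    simpa [hsd] using hB
  -- continuity of F₁, F₂ along the sequence
  have key : ∀ F : Set Ω → ℝ, ContinualAt μ F C →
      Tendsto (fun n => F (symmDiff A (Bn n))) atTop (𝓝 (F C)) := by
    intro F hF
    rw [Metric.tendsto_nhds]
    intro ε hε
    obtain ⟨δ, hδ, h⟩ := hF ε hε
    filter_upwards [hμn.eventually (Iio_mem_nhds hδ)] with n hn
    simpa [Real.dist_eq] using h _ hn
  -- convergence of the measures
  have hineq : ∀ X Y : Set Ω, (μ X).toReal ≤ (μ Y).toReal + (μ (symmDiff X Y)).toReal := by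
    intro X Y
    have h1 : μ X ≤ μ Y + μ (symmDiff X Y) := by
      refine le_trans (measure_mono ?_) (measure_union_le _ _)
      intro x hx
      by_cases h : x ∈ Y
      · exact Or.inl h
      · exact Or.inr (by simp [Set.mem_symmDiff, hx, h])
    calc (μ X).toReal ≤ (μ Y + μ (symmDiff X Y)).toReal :=
          ENNReal.toReal_mono (by finiteness) h1
      _ = _ := ENNReal.toReal_add (measure_ne_top _ _) (measure_ne_top _ _)
  have hg : Tendsto (fun n => (μ (symmDiff C (symmDiff A (Bn n)))).toReal) atTop (𝓝 0) := by
    have := (ENNReal.tendsto_toReal (a := 0) (by simp)).comp hμn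
    simpa [Function.comp_def] using this
  have htri : ∀ n, |(μ (symmDiff A (Bn n))).toReal - (μ C).toReal|
      ≤ (μ (symmDiff C (symmDiff A (Bn n)))).toReal := by
    intro n
    rw [abs_sub_le_iff]
    constructor
    · have := hineq (symmDiff A (Bn n)) C
      rw [symmDiff_comm (symmDiff A (Bn n)) C] at this
      linarith
    · have := hineq C (symmDiff A (Bn n))
      linarith
  have hf : Tendsto (fun n => (μ (symmDiff A (Bn n))).toReal) atTop (𝓝 (μ C).toReal) := by
    have h0 : Tendsto (fun n => (μ (symmDiff A (Bn n))).toReal - (μ C).toReal) atTop (𝓝 0) :=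
      squeeze_zero_norm (fun n => by simpa [Real.norm_eq_abs] using htri n) hg
    have := h0.add (tendsto_const_nhds (x := (μ C).toReal))
    simpa using this
  have hc0 : (μ C).toReal - (μ A).toReal ≠ 0 := by
    intro h
    exact hne ((ENNReal.toReal_eq_toReal_iff' (measure_ne_top μ _) (measure_ne_top μ _)).mp
      (sub_eq_zero.mp h))
  have hmain : Tendsto (fun n => (F₁ (symmDiff A (Bn n)) * F₂ (symmDiff A (Bn n)) - F₁ A * F₂ A) /
        ((μ (symmDiff A (Bn n))).toReal - (μ A).toReal)) atTop
      (𝓝 ((F₁ C * F₂ C - F₁ A * F₂ A) / ((μ C).toReal - (μ A).toReal))) :=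
    (((key F₁ hF₁).mul (key F₂ hF₂)).sub tendsto_const_nhds).div
      (hf.sub tendsto_const_nhds) hc0
  have heq : (F₂ C + F₂ A) / 2 * D₁ + (F₁ C + F₁ A) / 2 * D₂
      = (F₁ C * F₂ C - F₁ A * F₂ A) / ((μ C).toReal - (μ A).toReal) := by
    rw [hD₁, hD₂]
    field_simp
    ring
  rw [heq]
  exact hmain
end

section
/- Let μ be a finite measure on a measurable space Ω, let A and B be sets with μ(A Δ B) ≠ μ(A), and let F₁, F₂ : Set Ω → ℝ be set functions continual at A Δ B (with respect to μ) with F₂(A) ≠ 0 and F₂(A Δ B) ≠ 0. Let (Bₙ) be a sequence of sets with μ(Bₙ Δ B) → 0, and write D₁ = (F₁(A Δ B) − F₁(A)) / ((μ(A Δ B)).toReal − (μ(A)).toReal) and D₂ = (F₂(A Δ B) − F₂(A)) / ((μ(A Δ B)).toReal − (μ(A)).toReal). Then the difference quotients of the quotient, (F₁(A Δ Bₙ)/F₂(A Δ Bₙ) − F₁(A)/F₂(A)) / ((μ(A Δ Bₙ)).toReal − (μ(A)).toReal), converge to (F₂(A)·D₁ − F₁(A)·D₂) / (F₂(A Δ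 B)·F₂(A)) as n → ∞ (the rule for differentiating a quotient of set functions). -/
open MeasureTheory Filter Topology

lemma symmDiff_symmDiff_eq {Ω : Type*} (A B C : Set Ω) :
    symmDiff (symmDiff A B) (symmDiff A C) = symmDiff C B := by
  ext x
  simp only [Set.mem_symmDiff]
  tauto

lemma abs_toReal_sub_le {Ω : Type*} [MeasurableSpace Ω] (μ : Measure Ω) [IsFiniteMeasure μ]
    (X Y : Set Ω) : |(μ X).toReal - (μ Y).toReal| ≤ (μ (symmDiff X Y)).toReal := by
  have key : ∀ S T : Set Ω, (μ S).toReal ≤ (μ T).toReal + (μ (symmDiff S T)).toReal := by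
    intro S T
    have hsub : S ⊆ T ∪ symmDiff S T := by
      intro x hx
      by_cases h : x ∈ T
      · exact Or.inl h
      · exact Or.inr (by simp [Set.mem_symmDiff, hx, h])
    calc (μ S).toReal ≤ (μ (T ∪ symmDiff S T)).toReal := by
          apply ENNReal.toReal_mono (measure_ne_top μ _) (measure_mono hsub)
      _ ≤ (μ T).toReal + (μ (symmDiff S T)).toReal := by
          rw [← ENNReal.toReal_add (measure_ne_top μ _) (measure_ne_top μ _)]
          exact ENNReal.toReal_mono (by simp [measure_ne_top])
            (measure_union_le _ _)
  rw [abs_sub_le_iff]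
  constructor
  · linarith [key X Y]
  · have := key Y X
    rw [symmDiff_comm] at this
    linarith

lemma tendsto_F {Ω : Type*} [MeasurableSpace Ω] (μ : Measure Ω)
    (A B : Set Ω) (F : Set Ω → ℝ) (hF : ContinualAt μ F (symmDiff A B))
    (Bn : ℕ → Set Ω)
    (hB : Tendsto (fun n => μ (symmDiff (Bn n) B)) atTop (𝓝 0)) :
    Tendsto (fun n => F (symmDiff A (Bn n))) atTop (𝓝 (F (symmDiff A B))) := by
  rw [Metric.tendsto_atTop]
  intro ε hε
  obtain ⟨δ, hδ, h⟩ := hF ε hε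
  have : ∀ᶠ n in atTop, μ (symmDiff (Bn n) B) < δ :=
    hB.eventually (tendsto_id.eventually_lt_const hδ)
  obtain ⟨N, hN⟩ := this.exists_forall_of_atTop
  refine ⟨N, fun n hn => ?_⟩
  have hmu : μ (symmDiff (symmDiff A B) (symmDiff A (Bn n))) < δ := by
    rw [symmDiff_symmDiff_eq]
    exact hN n hn
  simpa [Real.dist_eq] using h _ hmu

theorem derivative_of_quotient {Ω : Type*} [MeasurableSpace Ω]
    (μ : Measure Ω) [IsFiniteMeasure μ]
    (A B : Set Ω) (hne : μ (symmDiff A B) ≠ μ A)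
    (F₁ F₂ : Set Ω → ℝ)
    (hF₁ : ContinualAt μ F₁ (symmDiff A B)) (hF₂ : ContinualAt μ F₂ (symmDiff A B))
    (hF₂A : F₂ A ≠ 0) (hF₂AB : F₂ (symmDiff A B) ≠ 0)
    (Bn : ℕ → Set Ω)
    (hB : Tendsto (fun n => μ (symmDiff (Bn n) B)) atTop (𝓝 0))
    (D₁ D₂ : ℝ)
    (hD₁ : D₁ = (F₁ (symmDiff A B) - F₁ A) /
        ((μ (symmDiff A B)).toReal - (μ A).toReal))
    (hD₂ : D₂ = (F₂ (symmDiff A B) - F₂ A) /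
        ((μ (symmDiff A B)).toReal - (μ A).toReal)) :
    Tendsto (fun n => (F₁ (symmDiff A (Bn n)) / F₂ (symmDiff A (Bn n)) - F₁ A / F₂ A) /
        ((μ (symmDiff A (Bn n))).toReal - (μ A).toReal)) atTop
      (𝓝 ((F₂ A * D₁ - F₁ A * D₂) / (F₂ (symmDiff A B) * F₂ A))) := by
  have hΔ : (μ (symmDiff A B)).toReal - (μ A).toReal ≠ 0 := by
    intro h
    exact hne ((ENNReal.toReal_eq_toReal_iff' (measure_ne_top μ _) (measure_ne_top μ _)).mp
      (by linarith))
  -- convergence of measures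
  have hBr : Tendsto (fun n => (μ (symmDiff (Bn n) B)).toReal) atTop (𝓝 0) := by
    have := (ENNReal.tendsto_toReal (ENNReal.zero_ne_top)).comp hB
    simpa [Function.comp_def] using this
  have hmu : Tendsto (fun n => (μ (symmDiff A (Bn n))).toReal) atTop
      (𝓝 ((μ (symmDiff A B)).toReal)) := by
    rw [tendsto_iff_dist_tendsto_zero]
    apply squeeze_zero (fun n => dist_nonneg) (fun n => ?_) hBr
    have h1 := abs_toReal_sub_le μ (symmDiff A (Bn n)) (symmDiff A B)
    rw [symmDiff_symmDiff_eq A (Bn n) B] at h1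
    · simpa [Real.dist_eq, symmDiff_comm] using h1
  have h1 := tendsto_F μ A B F₁ hF₁ Bn hB
  have h2 := tendsto_F μ A B F₂ hF₂ Bn hB
  have hlim : Tendsto (fun n => (F₁ (symmDiff A (Bn n)) / F₂ (symmDiff A (Bn n)) - F₁ A / F₂ A) /
      ((μ (symmDiff A (Bn n))).toReal - (μ A).toReal)) atTop
      (𝓝 ((F₁ (symmDiff A B) / F₂ (symmDiff A B) - F₁ A / F₂ A) /
        ((μ (symmDiff A B)).toReal - (μ A).toReal))) :=
    (((h1.div h2 hF₂AB).sub tendsto_const_nhds).div (hmu.sub tendsto_const_nhds) hΔ)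
  convert hlim using 2
  rw [hD₁, hD₂]
  field_simp
  ring
end
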